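/- For any infinite Φ-structure A and any two irreducible terms p(z_1,...,z_n) and q(w_1,...,w_m), where p, q are function variables and all z_i, w_j are immediate terms of sort ind: the identity p(z_1,...,z_n) = q(w_1,...,w_m) is valid in A (under all assignments to individual and function variables, with Kleene strong equality) if and only if the two terms are syntactically identical. -/

import Mathlib

namespace McCarthy

/-- Sorts: individual (`ind`) and Boolean (`bool`). -/
inductive Srt where
  | ind | bool
deriving DecidableEq

/-- A function variable is identified by its sort, arity and index. -/
abbrev FV : Type := Srt × ℕ × ℕ

/-- Explicit terms over a vocabulary `Φ`. -/
inductive Term (Φ : Type) where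
  | tt : Term Φ
  | ff : Term Φ
  | ivar : ℕ → Term Φ
  | fapp : FV → List (Term Φ) → Term Φ
  | prim : Φ → List (Term Φ) → Term Φ
  | cond : Srt → Term Φ → Term Φ → Term Φ → Term Φ

variable {Φ : Type}

def isIvar : Term Φ → Bool
  | .ivar _ => true
  | _ => false

/-- Immediate terms: individual variables, or function variables applied to
individual variables (nullary function variables included). -/
def isImmediate : Term Φ → Bool
  | .ivar _ => true
  | .fapp p args => (args.all isIvar) && (args.length == p.2.1)
  | _ => false

/-- Irreducible terms: immediate terms, Boolean constants, or applications
with immediate arguments. -/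
def isIrreducible : Term Φ → Bool
  | .tt => true
  | .ff => true
  | .ivar _ => true
  | .fapp p args => ((args.all isIvar) && (args.length == p.2.1)) || args.all isImmediate
  | .prim _ args => args.all isImmediate
  | .cond _ a b c => isImmediate a && isImmediate b && isImmediate c

/-- The sort of an immediate (or irreducible non-`prim`) term. -/
def immSort : Term Φ → Srt
  | .tt => .bool
  | .ff => .bool
  | .fapp p _ => p.1
  | .cond s _ _ _ => s
  | _ => .ind

mutual
/-- `sizeT E` counts the occurrences of non-immediate proper subterms of `E`. -/
def sizeT : Term Φ → ℕ
  | .tt => 0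
  | .ff => 0
  | .ivar _ => 0
  | .fapp _ args => sizeTL args
  | .prim _ args => sizeTL args
  | .cond _ a b c =>
      (sizeT a + (if isImmediate a then 0 else 1)) +
      (sizeT b + (if isImmediate b then 0 else 1)) +
      (sizeT c + (if isImmediate c then 0 else 1))

def sizeTL : List (Term Φ) → ℕ
  | [] => 0
  | t :: ts => (sizeT t + (if isImmediate t then 0 else 1)) + sizeTL ts
end

mutual
/-- Renaming of function variables. -/
def renameF (ρ : FV → FV) : Term Φ → Term Φ
  | .tt => .tt
  | .ff => .ff
  | .ivar i => .ivar i
  | .fapp p args => .fapp (ρ p) (renameFL ρ args)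
  | .prim f args => .prim f (renameFL ρ args)
  | .cond s a b c => .cond s (renameF ρ a) (renameF ρ b) (renameF ρ c)

def renameFL (ρ : FV → FV) : List (Term Φ) → List (Term Φ)
  | [] => []
  | t :: ts => renameF ρ t :: renameFL ρ ts
end

mutual
/-- Renaming of individual variables. -/
def renameV (σ : ℕ → ℕ) : Term Φ → Term Φ
  | .tt => .tt
  | .ff => .ff
  | .ivar i => .ivar (σ i)
  | .fapp p args => .fapp p (renameVL σ args)
  | .prim f args => .prim f (renameVL σ args)
  | .cond s a b c => .cond s (renameV σ a) (renameV σ b) (renameV σ c)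

def renameVL (σ : ℕ → ℕ) : List (Term Φ) → List (Term Φ)
  | [] => []
  | t :: ts => renameV σ t :: renameVL σ ts
end

mutual
/-- Does the function variable `q` occur in the term? -/
def occursF (q : FV) : Term Φ → Bool
  | .tt => false
  | .ff => false
  | .ivar _ => false
  | .fapp p args => (decide (p = q)) || occursFL q args
  | .prim _ args => occursFL q args
  | .cond _ a b c => occursF q a || occursF q b || occursF q c

def occursFL (q : FV) : List (Term Φ) → Bool
  | [] => false
  | t :: ts => occursF q t || occursFL q ts
end


/-! ## Extended recursive programs -/

/-- A body equation `p(x⃗) = rhs`. -/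
structure Eqn (Φ : Type) where
  p : FV
  xs : List ℕ
  rhs : Term Φ

/-- An extended recursive program `E₀(x⃗) where { p₁(x⃗₁) = E₁, …, p_K(x⃗_K) = E_K }`,
with the body represented as a multiset (set representation of the paper). -/
structure ExtProg (Φ : Type) where
  fvars : List ℕ
  head : Term Φ
  body : Multiset (Eqn Φ)

/-- The function variables bound by the body of a program. -/
def bodyPvars (E : ExtProg Φ) : Multiset FV := E.body.map Eqn.p

/-- `q` is fresh for `E`: it is not a recursion variable of `E` and occurs nowhere in `E`. -/
def FreshIn (q : FV) (E : ExtProg Φ) : Prop :=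
  occursF q E.head = false ∧ ∀ e ∈ E.body, e.p ≠ q ∧ occursF q e.rhs = false

/-- The argument list of an application term (the empty list otherwise). -/
def argsOf : Term Φ → List (Term Φ)
  | .fapp _ as => as
  | .prim _ as => as
  | .cond _ a b c => [a, b, c]
  | _ => []

/-- Replace the argument list of an application term. -/
def withArgs : Term Φ → List (Term Φ) → Term Φ
  | .fapp p _, as => .fapp p as
  | .prim f _, as => .prim f as
  | .cond s _ _ _, [a, b, c] => .cond s a b c
  | t, _ => t

def isApp : Term Φ → Bool
  | .fapp _ _ => true
  | .prim _ _ => true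
  | .cond _ _ _ _ => true
  | _ => false

/-- Labels `(p, j, q)` of arrow reductions. -/
abbrev Lbl : Type := FV × ℕ × FV

/-- The arrow-reduction relation `E(x⃗) →^{(p,j,q)} F(x⃗)` on extended programs:
either a non-immediate `j`-th argument of the (outermost application) right-hand side
of the body equation for `p` is split off into a new equation for the fresh variable `q`
(body case), or — when `p` is fresh, serving merely as a marker — the non-immediate
`j`-th argument of the head is split off (head case). -/
inductive Step : Lbl → ExtProg Φ → ExtProg Φ → Prop where
  | body (p : FV) (j : ℕ) (q : FV) (E F : ExtProg Φ) (s : Multiset (Eqn Φ)) (e : Eqn Φ)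
      (G : Term Φ)
      (hbody : E.body = s + {e}) (hp : e.p = p) (happ : isApp e.rhs = true)
      (hG : (argsOf e.rhs)[j]? = some G) (himm : isImmediate G = false)
      (hq : FreshIn q E) (har : q.2.1 = e.xs.length)
      (hF : F = ⟨E.fvars, E.head,
        s + {⟨p, e.xs, withArgs e.rhs ((argsOf e.rhs).set j (.fapp q (e.xs.map Term.ivar)))⟩,
             ⟨q, e.xs, G⟩}⟩) :
      Step (p, j, q) E F
  | head (p : FV) (j : ℕ) (q : FV) (E F : ExtProg Φ) (G : Term Φ)
      (hp : FreshIn p E) (hq : FreshIn q E) (hpq : p ≠ q) (happ : isApp E.head = true)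
      (hG : (argsOf E.head)[j]? = some G) (himm : isImmediate G = false)
      (har : q.2.1 = E.fvars.length)
      (hF : F = ⟨E.fvars,
        withArgs E.head ((argsOf E.head).set j (.fapp q (E.fvars.map Term.ivar))),
        E.body + {⟨q, E.fvars, G⟩}⟩) :
      Step (p, j, q) E F

/-- One-step reduction: arrow reduction for some label. -/
def Step1 (E F : ExtProg Φ) : Prop := ∃ l : Lbl, Step l E F

/-- The `~_E` relation on function variables used in the Amalgamation Lemma:
`p ~_E p'` iff both are the same recursion variable of `E` (body case) or
neither is a recursion variable of `E` (head case). -/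
def SameCase (E : ExtProg Φ) (p p' : FV) : Prop :=
  (p = p' ∧ p ∈ bodyPvars E) ∨ (p ∉ bodyPvars E ∧ p' ∉ bodyPvars E)

/-- Size of an extended program: total number of occurrences of non-immediate
proper subterms of its parts. -/
def sizeP (E : ExtProg Φ) : ℕ := sizeT E.head + (E.body.map (fun e => sizeT e.rhs)).sum

/-- An extended program is irreducible if all its parts are irreducible terms. -/
def IrrProg (E : ExtProg Φ) : Prop :=
  isIrreducible E.head = true ∧ ∀ e ∈ E.body, isIrreducible e.rhs = true

/-! ## Congruence -/

/-- `ρ` preserves sorts and arities of function variables. -/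
def SortArityPres (ρ : FV → FV) : Prop := ∀ v : FV, (ρ v).1 = v.1 ∧ (ρ v).2.1 = v.2.1

/-- One equation is obtained from another by renaming the (bound) individual
variables and applying a renaming `ρ` of the function variables. -/
def EqnCong (ρ : FV → FV) (e f : Eqn Φ) : Prop :=
  f.p = ρ e.p ∧ ∃ σ : ℕ → ℕ,
    (∀ a ∈ e.xs, ∀ b ∈ e.xs, σ a = σ b → a = b) ∧
    f.xs = e.xs.map σ ∧ f.rhs = renameV σ (renameF ρ e.rhs)

/-- Congruence of extended programs: an alphabetic change of the bound individual
and function variables together with a permutation of the body equations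
(the latter being automatic in the multiset representation). -/
def Congruent (E F : ExtProg Φ) : Prop :=
  ∃ ρ : FV → FV, Function.Bijective ρ ∧ SortArityPres ρ ∧
    (∀ p : FV, p ∉ bodyPvars E → ρ p = p) ∧
    F.fvars = E.fvars ∧ F.head = renameF ρ E.head ∧
    Multiset.Rel (EqnCong ρ) E.body F.body

/-- Full reduction: a (possibly empty) chain of one-step reductions followed by a
congruence, i.e. `E ≡_c F` or `E →₁ ⋯ →₁ F' ≡_c F`. -/
def Reduces (E F : ExtProg Φ) : Prop :=
  ∃ G : ExtProg Φ, Relation.ReflTransGen Step1 E G ∧ Congruent G F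


/-! ## Semantics -/

section Semantics

variable {A : Type}

/-- An environment for the function variables: a partial function
`Aⁿ ⇀ A ⊕ Bool` for each function variable (`none` = divergence). -/
abbrev Env (A : Type) : Type := FV → List A → Option (A ⊕ Bool)

/-- A `Φ`-structure on the universe `A`: a partial interpretation of each
primitive (`Sum.inl` for sort `ind`, `Sum.inr` for sort `bool`). -/
abbrev Struc (Φ A : Type) : Type := Φ → List A → Option (A ⊕ Bool)

/-- An environment is sort- and arity-respecting. -/
def GoodEnv (env : Env A) : Prop :=
  ∀ p : FV, ∀ as v, env p as = some v →
    as.length = p.2.1 ∧ (p.1 = Srt.ind → ∃ a, v = Sum.inl a) ∧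
    (p.1 = Srt.bool → ∃ b, v = Sum.inr b)

/-- A structure is sort- and arity-respecting. -/
def GoodStruc (St : Struc Φ A) (arΦ : Φ → ℕ) (sΦ : Φ → Srt) : Prop :=
  ∀ φ as v, St φ as = some v →
    as.length = arΦ φ ∧ (sΦ φ = Srt.ind → ∃ a, v = Sum.inl a) ∧
    (sΦ φ = Srt.bool → ∃ b, v = Sum.inr b)

/-- A structure is total (on arguments of the right arity). -/
def TotalStruc (St : Struc Φ A) (arΦ : Φ → ℕ) : Prop :=
  ∀ φ as, as.length = arΦ φ → (St φ as).isSome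

mutual
/-- Kleene evaluation of terms: `none` means divergence; arguments of
applications are evaluated strictly and must be of sort `ind`; the conditional
evaluates its test first and then the selected branch. -/
def eval (St : Struc Φ A) (iv : ℕ → A) (env : Env A) : Term Φ → Option (A ⊕ Bool)
  | .tt => some (Sum.inr true)
  | .ff => some (Sum.inr false)
  | .ivar i => some (Sum.inl (iv i))
  | .fapp p args =>
      match evalArgs St iv env args with
      | none => none
      | some as => env p as
  | .prim f args =>
      match evalArgs St iv env args with
      | none => none
      | some as => St f as
  | .cond _ a b c =>
      match eval St iv env a with
      | some (Sum.inr true) => eval St iv env b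
      | some (Sum.inr false) => eval St iv env c
      | _ => none

def evalArgs (St : Struc Φ A) (iv : ℕ → A) (env : Env A) :
    List (Term Φ) → Option (List A)
  | [] => some []
  | t :: ts =>
      match eval St iv env t with
      | some (Sum.inl a) =>
          match evalArgs St iv env ts with
          | some as => some (a :: as)
          | none => none
      | _ => none
end

/-- Validity of the identity `E = F` in the structure: Kleene strong equality
under every assignment of individuals to the individual variables and of
sort-respecting partial functions to the function variables. -/
def Valid (St : Struc Φ A) (E F : Term Φ) : Prop :=
  ∀ (iv : ℕ → A) (env : Env A), GoodEnv env → eval St iv env E = eval St iv env F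

/-- An individual variable is *placed* in the identity
`φ(zs₁) = ψ(zs₂)` if it is one of the listed immediate arguments. -/
def Placed (zs₁ zs₂ : List (Term Φ)) (s : ℕ) : Prop := Term.ivar s ∈ zs₁ ++ zs₂

/-- Injective validity `A ⊨_inj φ(zs₁) = ψ(zs₂)`: validity under all
assignments which are injective on the placed individual variables. -/
def ValidInjId (St : Struc Φ A) (φ ψ : Φ) (zs₁ zs₂ : List (Term Φ)) : Prop :=
  ∀ (iv : ℕ → A) (env : Env A), GoodEnv env →
    (∀ s t, Placed zs₁ zs₂ s → Placed zs₁ zs₂ t → iv s = iv t → s = t) →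
    eval St iv env (.prim φ zs₁) = eval St iv env (.prim ψ zs₂)

/-- Bind the variables `xs` to the values `as` on top of the assignment `iv`. -/
def bindList (xs : List ℕ) (as : List A) (iv : ℕ → A) (i : ℕ) : A :=
  match xs.findIdx? (· = i) with
  | some k => as.getD k (iv i)
  | none => iv i

/-- `env` solves the system of recursive equations in the body of `E`. -/
def Solves (St : Struc Φ A) (iv : ℕ → A) (E : ExtProg Φ) (env : Env A) : Prop :=
  ∀ e ∈ E.body, ∀ as : List A, as.length = e.xs.length →
    env e.p as = eval St (bindList e.xs as iv) env e.rhs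

/-- The pointwise partial-function (information) ordering on environments. -/
def envLE (env env' : Env A) : Prop :=
  ∀ p as, env p as = none ∨ env p as = env' p as

/-- `Den St iv E w` : the denotation of the extended program `E` at the
assignment `iv` is `w`, computed by evaluating the head at the least solution
of the body. -/
def Den (St : Struc Φ A) (iv : ℕ → A) (E : ExtProg Φ) (w : Option (A ⊕ Bool)) : Prop :=
  ∃ env : Env A, Solves St iv E env ∧ (∀ env', Solves St iv E env' → envLE env env') ∧
    eval St iv env E.head = w

/-! ## Recursors and intensions -/

/-- The renaming of individual variables matching the list `xs` with the list `ys`. -/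
def bindRen (xs ys : List ℕ) (i : ℕ) : ℕ :=
  match xs.findIdx? (· = i) with
  | some k => ys.getD k i
  | none => i

/-- The parts of two irreducible programs define the same functional, modulo the
renaming `ρ` of the recursion variables and the matching of the bound individual
variables. -/
def EqnSemEq (St : Struc Φ A) (ρ : FV → FV) (e f : Eqn Φ) : Prop :=
  e.p = ρ f.p ∧ e.xs.length = f.xs.length ∧
  ∀ (iv : ℕ → A) (env : Env A), GoodEnv env →
    eval St iv env e.rhs = eval St iv env (renameV (bindRen f.xs e.xs) (renameF ρ f.rhs))

/-- The recursors of `E` and `F` on the structure are equal (strongly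
isomorphic): the bodies match up to a sort- and arity-preserving bijection of the
recursion variables, with the corresponding parts denoting the same functionals. -/
def RecEq (St : Struc Φ A) (E F : ExtProg Φ) : Prop :=
  ∃ ρ : FV → FV, Function.Bijective ρ ∧ SortArityPres ρ ∧
    (∀ (iv : ℕ → A) (env : Env A), GoodEnv env →
      eval St iv env E.head = eval St iv env (renameF ρ F.head)) ∧
    Multiset.Rel (EqnSemEq St ρ) E.body F.body

/-- Intensional equivalence on a structure: the referential intensions (the
recursors of the canonical forms) of the two programs are equal. -/
def IntEqOn (St : Struc Φ A) (E F : ExtProg Φ) : Prop :=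
  ∃ E' F' : ExtProg Φ, Reduces E E' ∧ IrrProg E' ∧ Reduces F F' ∧ IrrProg F' ∧
    RecEq St E' F'

end Semantics

/-- Global intensional equivalence: equal referential intensions in every
infinite `Φ`-structure. -/
def GlobalIntEq (E F : ExtProg Φ) : Prop :=
  ∀ (A : Type) (St : Struc Φ A), Infinite A → IntEqOn St E F

/-- A program is proper if none of its parts is an immediate term of Boolean sort. -/
def ProperProg (E : ExtProg Φ) : Prop :=
  ¬(isImmediate E.head = true ∧ immSort E.head = Srt.bool) ∧
  ∀ e ∈ E.body, ¬(isImmediate e.rhs = true ∧ immSort e.rhs = Srt.bool)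


/-! ## Pure algebraic terms (Statement 0) -/

/-- Pure algebraic terms: built only from individual variables and function
variables of sort `ind` (of the correct arities) by application. -/
inductive PureAlg : Term Φ → Prop where
  | ivar (i : ℕ) : PureAlg (.ivar i)
  | fapp (n i : ℕ) (args : List (Term Φ)) (hargs : ∀ t ∈ args, PureAlg t)
      (hlen : args.length = n) : PureAlg (.fapp (Srt.ind, n, i) args)

/-! ## Bare identities (Statements 14, 16) -/

/-- A term is an individual variable or a nullary function variable of sort `ind`. -/
def BareVarT (t : Term Φ) : Prop :=
  (∃ i, t = Term.ivar i) ∨ (∃ i, t = Term.fapp (Srt.ind, 0, i) [])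

/-- A bare variable: `(false, i)` codes the individual variable `v_i`,
`(true, i)` codes the nullary function variable `p^{ind,0}_i`. -/
abbrev BareVar : Type := Bool × ℕ

/-- Canonical choice of bare variables: each variable occurring for the first
time is the first unused variable of its kind in the fixed alternating list
`v₀, p₀, v₁, p₁, …`. -/
def CanonicalBare (xs : List BareVar) : Prop :=
  ∀ i x, xs[i]? = some x → (∀ j < i, xs[j]? ≠ some x) →
    x.2 = (((xs.take i).filter (fun y => y.1 == x.1)).dedup).length

/-- The representative function of an equivalence relation `r` on the placed
variables: a placed variable is sent to the least element of its class. -/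
noncomputable def repFun (placed : ℕ → Prop) (r : ℕ → ℕ → Prop) (s : ℕ) : ℕ :=
  open Classical in
  if placed s then sInf {j | r s j} else s

/-! ## Propositional programs coding graphs (Statement 19) -/

/-- The propositional variable `r`. -/
def rVar : FV := (Srt.bool, 0, 0)

/-- The propositional variable `p_i`. -/
def pVar (n : ℕ) (i : Fin n) : FV := (Srt.bool, 0, 1 + (i : ℕ))

/-- The propositional variable `p_{ij}`. -/
def pijVar (n : ℕ) (i j : Fin n) : FV := (Srt.bool, 0, 1 + n + ((i : ℕ) * n + (j : ℕ)))

/-- The part `E_{ij}` of the program coding the graph `E`. -/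
def edgeTerm (n : ℕ) (E : Fin n → Fin n → Bool) (i j : Fin n) : Term Empty :=
  if E i j then
    .cond Srt.bool (.fapp (pVar n i) []) (.fapp (pVar n j) []) (.fapp rVar [])
  else
    .cond Srt.bool (.fapp (pVar n i) []) (.fapp rVar []) (.fapp (pVar n j) [])

/-- The irreducible propositional program `prog(E)` coding the graph `E`:
`true where { p_i = p_i : i < n } ∪ { p_{ij} = E_{ij} : i,j < n } ∪ { r = false }`. -/
def graphProg (n : ℕ) (E : Fin n → Fin n → Bool) : ExtProg Empty where
  fvars := []
  head := .tt
  body :=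
    (Finset.univ.val.map (fun i : Fin n => (⟨pVar n i, [], .fapp (pVar n i) []⟩ : Eqn Empty)))
    + ((Finset.univ.val (α := Fin n × Fin n)).map
        (fun ij => (⟨pijVar n ij.1 ij.2, [], edgeTerm n E ij.1 ij.2⟩ : Eqn Empty)))
    + {⟨rVar, [], .ff⟩}

/-! Since `A` is infinite there is an injection `f : (FV × List A) ⊕ ℕ ↪ A`. Interpret the
individual variable `vᵢ` as `f (inr i)` and every `ind`-valued function variable `r` at arguments
`as` as `f (inl (r, as))`: distinct immediate terms of sort `ind` then get distinct values, so a
valid identity `p(z⃗) = q(w⃗)` of sort `ind` forces `p = q` and `z⃗ = w⃗`. In sort `bool`, let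
the function variables be true exactly at `(p, values of z⃗)`. -/

theorem _root_.List.eq_of_map_eq_of_injOn {α β : Type*} {f : α → β} {s : Set α} (hf : s.InjOn f) :
    ∀ {l l' : List α}, (∀ a ∈ l, a ∈ s) → (∀ a ∈ l', a ∈ s) → l.map f = l'.map f → l = l'
  | [], [], _, _, _ => rfl
  | a :: l, a' :: l', hl, hl', h => by
    simp only [List.map_cons, List.cons.injEq] at h
    rw [hf (hl a (by simp)) (hl' a' (by simp)) h.1,
      List.eq_of_map_eq_of_injOn hf (fun b hb => hl b (by simp [hb]))
        (fun b hb => hl' b (by simp [hb])) h.2]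

instance : Finite Srt :=
  Finite.of_injective (fun s => s = Srt.ind) (by intro a b; cases a <;> cases b <;> simp)

theorem exists_sum_embedding (A : Type) [Infinite A] : Nonempty ((FV × List A) ⊕ ℕ ↪ A) := by
  open Cardinal in
  rw [← le_def, mk_sum, mk_prod, mk_list_eq_mk]
  simp only [lift_id, mk_nat]
  have hA := aleph0_le_mk A
  exact add_le_of_le hA (mul_le_of_le hA ((mk_le_aleph0 (α := FV)).trans hA) le_rfl) hA

section SeparatingAssignment

variable {A : Type}

theorem evalArgs_eq_some_map (St : Struc Φ A) (iv : ℕ → A) (env : Env A) {v : Term Φ → A} :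
    ∀ {l : List (Term Φ)}, (∀ t ∈ l, eval St iv env t = some (Sum.inl (v t))) →
      evalArgs St iv env l = some (l.map v)
  | [], _ => by simp [evalArgs]
  | t :: l, h => by
    have hl := evalArgs_eq_some_map St iv env fun u hu => h u (List.mem_cons_of_mem t hu)
    simp [evalArgs, h t List.mem_cons_self, hl]

variable (f : (FV × List A) ⊕ ℕ ↪ A)

def ivarCode : Term Φ → A
  | .ivar i => f (.inr i)
  | _ => f (.inr 0)

def immCode : Term Φ → A
  | .fapp r args => f (.inl (r, args.map (ivarCode f)))
  | t => ivarCode f t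

open Classical in
noncomputable def separatingEnv (tgt : FV × List A) : Env A := fun r as =>
  if as.length = r.2.1 then
    some (if r.1 = Srt.ind then .inl (f (.inl (r, as))) else .inr (decide ((r, as) = tgt)))
  else none

theorem goodEnv_separatingEnv (tgt : FV × List A) : GoodEnv (separatingEnv f tgt) := by
  intro r as v h
  simp only [separatingEnv] at h
  split_ifs at h with hlen hs <;> cases h
  · exact ⟨hlen, fun _ => ⟨_, rfl⟩, fun hb => absurd (hb ▸ hs) (by simp)⟩
  · exact ⟨hlen, fun hi => absurd hi hs, fun _ => ⟨_, rfl⟩⟩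

theorem eq_of_separatingEnv_eq {r r' : FV} {as as' : List A} (hs : r.1 = r'.1)
    (hlen : as.length = r.2.1) (hlen' : as'.length = r'.2.1)
    (h : separatingEnv f (r, as) r as = separatingEnv f (r, as) r' as') : (r, as) = (r', as') := by
  simp only [separatingEnv, hlen, hlen', ← hs, if_true, Option.some.injEq] at h
  split_ifs at h
  · simpa using f.injective (Sum.inl_injective h)
  · simpa [eq_comm] using h

theorem evalArgs_of_all_isIvar (St : Struc Φ A) (env : Env A) {l : List (Term Φ)}
    (hl : l.all isIvar = true) : evalArgs St (f ∘ .inr) env l = some (l.map (ivarCode f)) := by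
  refine evalArgs_eq_some_map St _ env fun t ht => ?_
  have := List.all_eq_true.mp hl t ht
  cases t <;> simp only [isIvar, reduceCtorEq] at this
  rfl

theorem eval_separatingEnv_of_isImmediate (St : Struc Φ A) (tgt : FV × List A) {z : Term Φ}
    (hz : isImmediate z = true) (hs : immSort z = Srt.ind) :
    eval St (f ∘ .inr) (separatingEnv f tgt) z = some (.inl (immCode f z)) := by
  cases z <;> simp only [isImmediate, Bool.and_eq_true, beq_iff_eq, reduceCtorEq] at hz
  case ivar i => rfl
  case fapp r args =>
    simp [eval, evalArgs_of_all_isIvar f St _ hz.1, separatingEnv, hz.2, immCode, show r.1 = _ from hs]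

theorem injOn_ivarCode : {t : Term Φ | isIvar t = true}.InjOn (ivarCode f) := by
  intro t ht t' ht' h
  cases t <;> cases t' <;> simp_all [isIvar, ivarCode]

theorem injOn_immCode : {t : Term Φ | isImmediate t = true}.InjOn (immCode f) := by
  intro t ht t' ht' h
  cases t <;> cases t' <;> simp only [Set.mem_ofPred_eq, isImmediate, reduceCtorEq] at ht ht'
  case ivar.ivar => exact injOn_ivarCode f rfl rfl h
  case ivar.fapp => cases Sum.inr_ne_inl (f.injective h)
  case fapp.ivar => cases Sum.inl_ne_inr (f.injective h)
  case fapp.fapp r args r' args' =>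
    obtain ⟨rfl, hargs⟩ := Prod.ext_iff.mp (Sum.inl_injective (f.injective h))
    simp only [Bool.and_eq_true, List.all_eq_true] at ht ht'
    rw [List.eq_of_map_eq_of_injOn (injOn_ivarCode f) ht.1 ht'.1 hargs]

theorem evalArgs_separatingEnv (St : Struc Φ A) (tgt : FV × List A) {l : List (Term Φ)}
    (hl : ∀ z ∈ l, isImmediate z = true ∧ immSort z = Srt.ind) :
    evalArgs St (f ∘ .inr) (separatingEnv f tgt) l = some (l.map (immCode f)) :=
  evalArgs_eq_some_map St _ _ fun z hz =>
    eval_separatingEnv_of_isImmediate f St tgt (hl z hz).1 (hl z hz).2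

end SeparatingAssignment

/-- **form 2–2.** In any infinite `Φ`-structure, an identity
`p(z₁,…,z_n) = q(w₁,…,w_m)` between function-variable applications with immediate
arguments of sort `ind` is valid iff the two terms are syntactically identical. -/
theorem statement7 {Φ A : Type} [Infinite A] (St : Struc Φ A)
    (p q : FV) (zs ws : List (Term Φ))
    (hz : ∀ z ∈ zs, isImmediate z = true ∧ immSort z = Srt.ind)
    (hw : ∀ w ∈ ws, isImmediate w = true ∧ immSort w = Srt.ind)
    (hlz : zs.length = p.2.1) (hlw : ws.length = q.2.1) (hsort : p.1 = q.1) :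
    Valid St (.fapp p zs) (.fapp q ws) ↔ Term.fapp p zs = Term.fapp q ws := by
  refine ⟨fun hv => ?_, fun h iv env _ => h ▸ rfl⟩
  obtain ⟨f⟩ := exists_sum_embedding A
  let tgt := (p, zs.map (immCode f))
  have key := hv (f ∘ .inr) (separatingEnv f tgt) (goodEnv_separatingEnv f tgt)
  simp only [eval, evalArgs_separatingEnv f St tgt hz, evalArgs_separatingEnv f St tgt hw] at key
  obtain ⟨rfl, hmap⟩ := Prod.ext_iff.mp
    (eq_of_separatingEnv_eq f hsort (by simpa using hlz) (by simpa using hlw) key)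
  rw [List.eq_of_map_eq_of_injOn (injOn_immCode f) (fun z hz' => (hz z hz').1)
    (fun w hw' => (hw w hw').1) hmap]

end McCarthy
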